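/- arXiv:2108.02910 — 4 statements merged into one kernel-verified Lean document; each statement's English description precedes it below -/
import Mathlib

section
/- Let θ ∈ (1/2, 1] and let r_2, …, r_n be positive reals with r_k ≤ r_p := (2 + 2√(2θ))/(2θ − 1) for all k. Define recursively l_1 := 2 and l_k := (2/(1 + r_k)²)·[(1 + r_k)(1 + 2θ r_k) − (2θ − 1)² r_k³/(2 l_{k−1})] for 2 ≤ k ≤ n. Then l_k ≥ 2 for every 1 ≤ k ≤ n. -/
/-!
Write `a = 2θ - 1 > 0`. Since `(1 + r)(1 + 2θ r) - (1 + r)² = a r (1 + r)`, the bound `l_k ≥ 2` is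
equivalent to `a r_k² / (2 l_{k-1}) ≤ 1 + r_k`, which follows from `l_{k-1} ≥ 2` once
`a r² ≤ 4 (1 + r)`. With `s = √(2θ)` the threshold is `r_p = 2 / (s - 1)`, and `(s - 1) r ≤ 2`
gives `a r² = (s + 1) (s - 1) r² ≤ 2 (s + 1) r ≤ 4 (1 + r)`.
-/

lemma sq_mul_le_of_le_rp {θ R : ℝ} (hθ : 1 / 2 < θ) (hR : 0 ≤ R)
    (hRp : R ≤ (2 + 2 * Real.sqrt (2 * θ)) / (2 * θ - 1)) :
    (2 * θ - 1) * R ^ 2 ≤ 4 * (1 + R) := by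
  set s := Real.sqrt (2 * θ)
  have hs2 : s ^ 2 = 2 * θ := Real.sq_sqrt (by linarith)
  have hs1 : 1 < s := by nlinarith [Real.sqrt_nonneg (2 * θ)]
  have hRs : (s - 1) * R ≤ 2 := by
    have hden : 2 * θ - 1 = (s - 1) * (s + 1) := by rw [← hs2]; ring
    rw [hden, show 2 + 2 * s = 2 * (s + 1) by ring, mul_div_mul_right _ _ (by positivity),
      le_div_iff₀ (by linarith)] at hRp
    linarith
  calc (2 * θ - 1) * R ^ 2 = (s + 1) * R * ((s - 1) * R) := by rw [← hs2]; ring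
    _ ≤ (s + 1) * R * 2 := by gcongr
    _ ≤ 4 * (1 + R) := by nlinarith

lemma two_le_step {θ R L : ℝ} (hθ : 1 / 2 ≤ θ) (hR : 0 ≤ R)
    (hRL : (2 * θ - 1) * R ^ 2 ≤ 4 * (1 + R)) (hL : 2 ≤ L) :
    2 ≤ 2 / (1 + R) ^ 2 *
      ((1 + R) * (1 + 2 * θ * R) - (2 * θ - 1) ^ 2 * R ^ 3 / (2 * L)) := by
  have ha : 0 ≤ 2 * θ - 1 := by linarith
  have hdefect : (2 * θ - 1) ^ 2 * R ^ 3 / (2 * L) ≤ (2 * θ - 1) * R * (1 + R) :=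
    calc (2 * θ - 1) ^ 2 * R ^ 3 / (2 * L) ≤ (2 * θ - 1) ^ 2 * R ^ 3 / 4 := by
          gcongr; linarith
      _ = (2 * θ - 1) * R * ((2 * θ - 1) * R ^ 2) / 4 := by ring
      _ ≤ (2 * θ - 1) * R * (4 * (1 + R)) / 4 := by gcongr
      _ = (2 * θ - 1) * R * (1 + R) := by ring
  rw [div_mul_eq_mul_div, le_div_iff₀ (by positivity)]
  nlinarith

/-- Let `θ ∈ (1/2, 1]` and let `r_2, …, r_n` be positive reals with
`r_k ≤ r_p = (2 + 2√(2θ))/(2θ − 1)`. Define recursively `l_1 = 2` and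
`l_k = (2/(1 + r_k)²)·[(1 + r_k)(1 + 2θ r_k) − (2θ − 1)² r_k³/(2 l_{k−1})]` for `2 ≤ k ≤ n`.
Then `l_k ≥ 2` for every `1 ≤ k ≤ n`. -/
theorem l_ge_two
    (θ : ℝ) (hθ : 1 / 2 < θ ∧ θ ≤ 1)
    (n : ℕ) (r : ℕ → ℝ)
    (hr : ∀ k, 2 ≤ k → k ≤ n →
      0 < r k ∧ r k ≤ (2 + 2 * Real.sqrt (2 * θ)) / (2 * θ - 1))
    (l : ℕ → ℝ) (hl1 : l 1 = 2)
    (hlk : ∀ k, 2 ≤ k → k ≤ n →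
      l k = 2 / (1 + r k) ^ 2 *
        ((1 + r k) * (1 + 2 * θ * r k) - (2 * θ - 1) ^ 2 * (r k) ^ 3 / (2 * l (k - 1)))) :
    ∀ k, 1 ≤ k → k ≤ n → 2 ≤ l k := by
  intro k hk
  induction k, hk using Nat.le_induction with
  | base => exact fun _ => hl1.ge
  | succ m hm ih =>
    intro hmn
    obtain ⟨hpos, hle⟩ := hr (m + 1) (by omega) hmn
    rw [hlk (m + 1) (by omega) hmn, Nat.add_sub_cancel]
    exact two_le_step hθ.1.le hpos.le (sq_mul_le_of_le_rp hθ.1 hpos.le hle) (ih (by omega))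
end

section
/- Let θ ∈ (1/2, 1] and suppose the adjacent step ratios satisfy 0 < r_k ≤ r_s for all 2 ≤ k ≤ n, where r_s is the unique positive root of (1 − 2θ)² r³ − 4θ² r² − 4θ r − 1 = 0. Then for every real sequence ω_1, …, ω_n one has ∑_{k=1}^n ω_k ∑_{j=1}^k b_{k−j}^{(k)} ω_j ≥ 0, i.e., the WSBDF2 convolution kernels are positive semi-definite. -/
/-!
Write `Q_n(ω)` for the quadratic form of a kernel family whose only nonzero kernels are
`b_0^{(k)}` and `b_1^{(k)}`. Then
`Q_{k+1} = Q_k + b_1^{(k+1)} ω_k ω_{k+1} + b_0^{(k+1)} ω_{k+1}²`, and completing the square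
shows that a lower bound `Q_k ≥ e_k ω_k²` propagates to `Q_{k+1} ≥ e_{k+1} ω_{k+1}²` as soon as
`(b_1^{(k+1)})² ≤ 4 e_k (b_0^{(k+1)} - e_{k+1})`.
For the WSBDF2 kernels the choice `e_k = c / τ_k` with `c = (1 + 2θ r_s) / (2 (1 + r_s))`,
the steady state of this recursion at the constant ratio `r_s`, satisfies that condition for
every ratio `0 < r ≤ r_s`, which reduces to a cubic inequality in `r` vanishing at `r = r_s`.
-/

open Finset

/-- Adjacent time-step ratios `r_k = τ_k / τ_{k-1}`. -/
noncomputable def rr (τ : ℕ → ℝ) (k : ℕ) : ℝ := τ k / τ (k - 1)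

/-- The WSBDF2 convolution kernels `b_j^{(n)}`:
`b_0^{(1)} = 1/τ_1`, and for `n ≥ 2`,
`b_0^{(n)} = (1 + 2θ r_n)/(τ_n (1 + r_n))`, `b_1^{(n)} = (1 - 2θ) r_n² /(τ_n (1 + r_n))`,
all other kernels vanish. -/
noncomputable def bk (θ : ℝ) (τ : ℕ → ℝ) (n j : ℕ) : ℝ :=
  if n = 1 then (if j = 0 then 1 / τ 1 else 0)
  else if j = 0 then (1 + 2 * θ * rr τ n) / (τ n * (1 + rr τ n))
  else if j = 1 then (1 - 2 * θ) * (rr τ n) ^ 2 / (τ n * (1 + rr τ n))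
  else 0

/-- The DOC (discrete orthogonal convolution) kernels: `dk θ τ n m` is `d_m^{(n)}`,
defined by `d_0^{(n)} = 1/b_0^{(n)}` and
`d_{n-k}^{(n)} = -(b_1^{(k+1)}/b_0^{(k)}) d_{n-k-1}^{(n)}` for `1 ≤ k ≤ n-1`. -/
noncomputable def dk (θ : ℝ) (τ : ℕ → ℝ) (n : ℕ) : ℕ → ℝ
  | 0 => 1 / bk θ τ n 0
  | m + 1 => -(bk θ τ (n - m) 1 / bk θ τ (n - m - 1) 0) * dk θ τ n m


noncomputable def kernelQuadForm (b : ℕ → ℕ → ℝ) (ω : ℕ → ℝ) (n : ℕ) : ℝ :=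
  ∑ k ∈ Icc 1 n, ω k * ∑ j ∈ Icc 1 k, b k (k - j) * ω j

section KernelQuadForm

variable {b : ℕ → ℕ → ℝ} (ω : ℕ → ℝ)

lemma kernelQuadForm_one : kernelQuadForm b ω 1 = b 1 0 * ω 1 ^ 2 := by
  simp only [kernelQuadForm, Icc_self, sum_singleton, Nat.sub_self]
  ring

lemma kernelQuadForm_succ {n : ℕ} (hn : 1 ≤ n) (hb : ∀ j, 2 ≤ j → b (n + 1) j = 0) :
    kernelQuadForm b ω (n + 1)
      = kernelQuadForm b ω n + ω (n + 1) * (b (n + 1) 1 * ω n + b (n + 1) 0 * ω (n + 1)) := by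
  rw [kernelQuadForm, sum_Icc_succ_top (by omega), ← kernelQuadForm,
    sum_Icc_succ_top (by omega), Nat.sub_self]
  congr 3
  rw [sum_eq_single_of_mem n (by simp [hn]), Nat.add_sub_cancel_left]
  intro j hj hjn
  rw [hb _ (by simp only [mem_Icc] at hj; omega), zero_mul]

lemma mul_sq_le_of_sq_le_four_mul {e e' a β x y : ℝ} (he : 0 < e)
    (h : β ^ 2 ≤ 4 * e * (a - e')) :
    e' * y ^ 2 ≤ e * x ^ 2 + y * (β * x + a * y) := by
  nlinarith [sq_nonneg (2 * e * x + β * y)]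

theorem mul_sq_le_kernelQuadForm {e : ℕ → ℝ} (hb : ∀ k j, 2 ≤ j → b k j = 0)
    (h₁ : e 1 ≤ b 1 0) {n : ℕ} (hn : 1 ≤ n)
    (hstep : ∀ k, 1 ≤ k → k < n →
      0 < e k ∧ b (k + 1) 1 ^ 2 ≤ 4 * e k * (b (k + 1) 0 - e (k + 1))) :
    e n * ω n ^ 2 ≤ kernelQuadForm b ω n := by
  induction n, hn using Nat.le_induction with
  | base =>
    rw [kernelQuadForm_one]
    exact mul_le_mul_of_nonneg_right h₁ (sq_nonneg _)
  | succ n hn ih =>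
    obtain ⟨he, hβ⟩ := hstep n hn n.lt_succ_self
    have hQ := ih fun k hk hkn => hstep k hk (by omega)
    rw [kernelQuadForm_succ ω hn (hb (n + 1))]
    linarith [mul_sq_le_of_sq_le_four_mul (x := ω n) (y := ω (n + 1)) he hβ]

end KernelQuadForm

section WSBDF2

variable {θ rs r : ℝ} {τ : ℕ → ℝ}

lemma wsbdf2_ratio_poly_nonneg (hθ₁ : 1 / 2 ≤ θ) (hθ₂ : θ ≤ 1) (hrs : 0 < rs)
    (hroot : (1 - 2 * θ) ^ 2 * rs ^ 3 - 4 * θ ^ 2 * rs ^ 2 - 4 * θ * rs - 1 = 0)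
    (hr : 0 < r) (hrrs : r ≤ rs) :
    (2 * θ - 1) ^ 2 * r ^ 3 * (1 + rs) ^ 2
      ≤ 2 * (1 + 2 * θ * rs) * (1 + rs) * (1 + 2 * θ * r) * (1 + r)
        - (1 + 2 * θ * rs) ^ 2 * (1 + r) ^ 2 := by
  -- The difference vanishes at `r = rs` by the root equation; its cofactor of `rs - r` is a
  -- positive combination of monomials.
  have hfactor : rs ^ 3 * (2 * (1 + 2 * θ * rs) * (1 + rs) * (1 + 2 * θ * r) * (1 + r)
        - (1 + 2 * θ * rs) ^ 2 * (1 + r) ^ 2 - (2 * θ - 1) ^ 2 * r ^ 3 * (1 + rs) ^ 2)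
      = (rs - r) * (1 + 2 * θ * rs) * ((1 + 2 * (1 - θ) * rs) * (rs ^ 2 + rs * r + r ^ 2)
          + (2 * rs + 4 * θ) * (r * rs * (rs + r))
          + (4 * θ - 1 + 2 * θ * rs) * (r ^ 2 * rs ^ 2)) := by
    linear_combination (-(r ^ 3) * (1 + rs) ^ 2) * hroot
  have hcofactor : 0 ≤ (rs - r) * (1 + 2 * θ * rs) * ((1 + 2 * (1 - θ) * rs)
      * (rs ^ 2 + rs * r + r ^ 2) + (2 * rs + 4 * θ) * (r * rs * (rs + r))
      + (4 * θ - 1 + 2 * θ * rs) * (r ^ 2 * rs ^ 2)) := by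
    have h1θ : 0 ≤ 1 - θ := by linarith
    have h4θ : 0 ≤ 4 * θ - 1 := by linarith
    positivity
  rw [← hfactor] at hcofactor
  linarith [(mul_nonneg_iff_of_pos_left (pow_pos hrs 3)).mp hcofactor]

noncomputable def wsbdf2SteadyWeight (θ rs : ℝ) : ℝ := (1 + 2 * θ * rs) / (2 * (1 + rs))

lemma wsbdf2SteadyWeight_pos (hθ : 0 ≤ θ) (hrs : 0 < rs) : 0 < wsbdf2SteadyWeight θ rs := by
  unfold wsbdf2SteadyWeight; positivity

lemma wsbdf2SteadyWeight_le_one (hθ : θ ≤ 1) (hrs : 0 < rs) :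
    wsbdf2SteadyWeight θ rs ≤ 1 := by
  rw [wsbdf2SteadyWeight, div_le_one (by positivity)]
  nlinarith

lemma bk_eq_zero_of_two_le (k : ℕ) {j : ℕ} (hj : 2 ≤ j) : bk θ τ k j = 0 := by
  unfold bk
  split_ifs <;> first | rfl | omega

lemma bk_one_zero : bk θ τ 1 0 = 1 / τ 1 := by
  simp [bk]

lemma bk_succ_one_sq_le {k : ℕ} (hθ₁ : 1 / 2 ≤ θ) (hθ₂ : θ ≤ 1) (hrs : 0 < rs)
    (hroot : (1 - 2 * θ) ^ 2 * rs ^ 3 - 4 * θ ^ 2 * rs ^ 2 - 4 * θ * rs - 1 = 0)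
    (hk : 1 ≤ k) (hτk : 0 < τ k) (hr : 0 < rr τ (k + 1)) (hrrs : rr τ (k + 1) ≤ rs) :
    bk θ τ (k + 1) 1 ^ 2 ≤ 4 * (wsbdf2SteadyWeight θ rs / τ k)
      * (bk θ τ (k + 1) 0 - wsbdf2SteadyWeight θ rs / τ (k + 1)) := by
  have hpoly := wsbdf2_ratio_poly_nonneg hθ₁ hθ₂ hrs hroot hr hrrs
  have hτ_succ : τ (k + 1) = rr τ (k + 1) * τ k := by
    rw [rr, Nat.add_sub_cancel, div_mul_cancel₀ _ hτk.ne']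
  simp only [bk, show k + 1 ≠ 1 by omega, if_false, if_true, one_ne_zero]
  rw [hτ_succ, wsbdf2SteadyWeight, ← sub_nonneg]
  generalize rr τ (k + 1) = r at hr hpoly ⊢
  field_simp
  linear_combination 4 * hpoly

end WSBDF2

theorem wsbdf2_kernels_psd_of_ratio_le_rs_general
    (θ : ℝ) (hθ : 1 / 2 < θ ∧ θ ≤ 1)
    (N : ℕ)
    (τ : ℕ → ℝ) (hτ : ∀ k, 1 ≤ k → k ≤ N → 0 < τ k)
    (n : ℕ) (hn : 1 ≤ n) (hnN : n ≤ N)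
    (rs : ℝ) (hrs_pos : 0 < rs)
    (hrs_root : (1 - 2 * θ) ^ 2 * rs ^ 3 - 4 * θ ^ 2 * rs ^ 2 - 4 * θ * rs - 1 = 0)
    (hr : ∀ k, 2 ≤ k → k ≤ n → 0 < rr τ k ∧ rr τ k ≤ rs)
    (ω : ℕ → ℝ) :
    0 ≤ ∑ k ∈ Finset.Icc 1 n, ω k * ∑ j ∈ Finset.Icc 1 k, bk θ τ k (k - j) * ω j := by
  obtain ⟨hθ₁, hθ₂⟩ := hθ
  set c := wsbdf2SteadyWeight θ rs
  have hc : 0 < c := wsbdf2SteadyWeight_pos (by linarith) hrs_pos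
  have h₁ : c / τ 1 ≤ bk θ τ 1 0 := by
    rw [bk_one_zero]
    exact div_le_div_of_nonneg_right (wsbdf2SteadyWeight_le_one hθ₂ hrs_pos)
      (hτ 1 le_rfl (by omega)).le
  have hQ := mul_sq_le_kernelQuadForm (e := fun k => c / τ k) ω
    (fun k _ => bk_eq_zero_of_two_le k) h₁ hn fun k hk hkn => by
      have hτk := hτ k hk (by omega)
      obtain ⟨hr₀, hr_le⟩ := hr (k + 1) (by omega) hkn
      exact ⟨div_pos hc hτk,
        bk_succ_one_sq_le hθ₁.le hθ₂ hrs_pos hrs_root hk hτk hr₀ hr_le⟩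
  have hτn := hτ n hn hnN
  exact (by positivity : 0 ≤ c / τ n * ω n ^ 2).trans hQ

/-- Let `θ ∈ (1/2, 1]` and suppose the adjacent step ratios satisfy
`0 < r_k ≤ r_s` for `2 ≤ k ≤ n`, where `r_s` is the unique positive root of
`(1 − 2θ)² r³ − 4θ² r² − 4θ r − 1 = 0`. Then the WSBDF2 convolution kernels are positive
semi-definite: `∑_{k=1}^n ω_k ∑_{j=1}^k b_{k−j}^{(k)} ω_j ≥ 0` for every real sequence. -/
theorem wsbdf2_kernels_psd_of_ratio_le_rs
    (θ : ℝ) (hθ : 1 / 2 < θ ∧ θ ≤ 1)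
    (N : ℕ) (hN : 1 ≤ N)
    (τ : ℕ → ℝ) (hτ : ∀ k, 1 ≤ k → k ≤ N → 0 < τ k)
    (n : ℕ) (hn : 1 ≤ n) (hnN : n ≤ N)
    (rs : ℝ) (hrs_pos : 0 < rs)
    (hrs_root : (1 - 2 * θ) ^ 2 * rs ^ 3 - 4 * θ ^ 2 * rs ^ 2 - 4 * θ * rs - 1 = 0)
    (hrs_uniq : ∀ r : ℝ, 0 < r →
      (1 - 2 * θ) ^ 2 * r ^ 3 - 4 * θ ^ 2 * r ^ 2 - 4 * θ * r - 1 = 0 → r = rs)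
    (hr : ∀ k, 2 ≤ k → k ≤ n → 0 < rr τ k ∧ rr τ k ≤ rs)
    (ω : ℕ → ℝ) :
    0 ≤ ∑ k ∈ Finset.Icc 1 n, ω k * ∑ j ∈ Finset.Icc 1 k, bk θ τ k (k - j) * ω j :=
  wsbdf2_kernels_psd_of_ratio_le_rs_general θ hθ N τ hτ n hn hnN rs hrs_pos hrs_root hr ω
end

section
/- For θ ∈ [1/2, 1] and arbitrary positive steps τ_1, …, τ_N, the DOC kernels satisfy d_{k−1}^{(k)} ≤ τ_k / 2^{k−1} for every 1 ≤ k ≤ n, and consequently ∑_{k=1}^n d_{k−1}^{(k)} ≤ 2 τ_max, where τ_max := max_{1 ≤ k ≤ N} τ_k. -/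
open Finset

/-!
Unrolling the recursion one step gives `d_{m+1}^{(n+1)} = -(b_1^{(n+1)} / b_0^{(n+1)}) d_m^{(n)}`.
With `r = r_{n+1}` the factor equals `(2θ - 1) r² / (1 + 2θ r)`, which lies in `[0, r/2]` for
`θ ∈ [1/2, 1]`; since `r τ_n = τ_{n+1}`, induction along the diagonal gives
`0 ≤ d_{k-1}^{(k)} ≤ τ_k / 2^{k-1}`, and the sum is dominated by a geometric series.
-/

lemma dk_succ_succ (θ : ℝ) (τ : ℕ → ℝ) (n m : ℕ) :
    dk θ τ (n + 1) (m + 1) = -(bk θ τ (n + 1) 1 / bk θ τ (n + 1) 0) * dk θ τ n m := by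
  induction m with
  | zero => simp only [dk, Nat.sub_zero, Nat.add_sub_cancel]; ring
  | succ m ih =>
    rw [dk, Nat.add_sub_add_right, ih, dk]
    ring

lemma neg_bk_one_div_bk_zero {θ : ℝ} {τ : ℕ → ℝ} {n : ℕ} (hn : 1 ≤ n)
    (hτn : 0 < τ n) (hτ : 0 < τ (n + 1)) (hθ : 0 ≤ θ) :
    -(bk θ τ (n + 1) 1 / bk θ τ (n + 1) 0) =
      (2 * θ - 1) * rr τ (n + 1) ^ 2 / (1 + 2 * θ * rr τ (n + 1)) := by
  have hr : 0 < rr τ (n + 1) := div_pos hτ (by simpa using hτn)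
  have hb0 : 0 < 1 + 2 * θ * rr τ (n + 1) := by positivity
  simp only [bk, show n + 1 ≠ 1 by omega, if_false, one_ne_zero, if_true]
  field_simp
  ring

lemma wsbdf2_factor_nonneg {θ r : ℝ} (hθ : 1 / 2 ≤ θ) (hr : 0 < r) :
    0 ≤ (2 * θ - 1) * r ^ 2 / (1 + 2 * θ * r) := by
  apply div_nonneg <;> nlinarith

lemma wsbdf2_factor_le_half {θ r : ℝ} (hθ : 1 / 2 ≤ θ ∧ θ ≤ 1) (hr : 0 < r) :
    (2 * θ - 1) * r ^ 2 / (1 + 2 * θ * r) ≤ r / 2 := by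
  rw [div_le_div_iff₀ (by nlinarith) two_pos]
  nlinarith

lemma dk_diag_nonneg_and_le {θ : ℝ} (hθ : 1 / 2 ≤ θ ∧ θ ≤ 1) {N : ℕ} {τ : ℕ → ℝ}
    (hτ : ∀ k, 1 ≤ k → k ≤ N → 0 < τ k) (m : ℕ) (hm : m + 1 ≤ N) :
    0 ≤ dk θ τ (m + 1) m ∧ dk θ τ (m + 1) m ≤ τ (m + 1) / 2 ^ m := by
  induction m with
  | zero =>
    have h1 : dk θ τ 1 0 = τ 1 := by simp [dk, bk]
    simpa [h1] using (hτ 1 le_rfl hm).le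
  | succ m ih =>
    obtain ⟨ih_nonneg, ih_le⟩ := ih (by omega)
    have hτm : 0 < τ (m + 1) := hτ (m + 1) (by omega) (by omega)
    have hτm' : 0 < τ (m + 2) := hτ (m + 2) (by omega) hm
    set r := rr τ (m + 2)
    have hr : 0 < r := div_pos hτm' hτm
    have hrτ : r * τ (m + 1) = τ (m + 2) := div_mul_cancel₀ _ hτm.ne'
    rw [dk_succ_succ, neg_bk_one_div_bk_zero (by omega) hτm hτm' (by linarith [hθ.1])]
    have hfac := wsbdf2_factor_nonneg hθ.1 hr
    refine ⟨mul_nonneg hfac ih_nonneg, ?_⟩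
    calc (2 * θ - 1) * r ^ 2 / (1 + 2 * θ * r) * dk θ τ (m + 1) m
        ≤ r / 2 * (τ (m + 1) / 2 ^ m) :=
          mul_le_mul (wsbdf2_factor_le_half hθ hr) ih_le ih_nonneg (by positivity)
      _ = τ (m + 2) / 2 ^ (m + 1) := by rw [← hrτ, pow_succ]; ring

lemma sum_Icc_div_two_pow_le {f : ℕ → ℝ} {M : ℝ} (n : ℕ) (hM : 0 ≤ M)
    (hf : ∀ k ∈ Icc 1 n, f k ≤ M) :
    ∑ k ∈ Icc 1 n, f k / 2 ^ (k - 1) ≤ 2 * M := by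
  rw [← Ico_add_one_right_eq_Icc, sum_Ico_eq_sum_range, Nat.add_sub_cancel]
  calc ∑ i ∈ range n, f (1 + i) / 2 ^ (1 + i - 1)
      ≤ ∑ i ∈ range n, M * (1 / 2) ^ i := by
        refine sum_le_sum fun i hi => ?_
        rw [Nat.add_sub_cancel_left, one_div_pow, ← div_eq_mul_one_div]
        gcongr
        exact hf _ (Ico_add_one_right_eq_Icc 1 n ▸ mem_Ico.2 ⟨by omega, by simp at hi; omega⟩)
    _ = M * ∑ i ∈ range n, (1 / 2 : ℝ) ^ i := (mul_sum ..).symm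
    _ ≤ M * 2 := mul_le_mul_of_nonneg_left (sum_geometric_two_le n) hM
    _ = 2 * M := mul_comm ..

theorem doc_first_column_bound_general
    (θ : ℝ) (hθ : 1 / 2 ≤ θ ∧ θ ≤ 1)
    (N : ℕ) (hN : 1 ≤ N)
    (τ : ℕ → ℝ) (hτ : ∀ k, 1 ≤ k → k ≤ N → 0 < τ k)
    (n : ℕ) (hnN : n ≤ N) :
    (∀ k, 1 ≤ k → k ≤ n → dk θ τ k (k - 1) ≤ τ k / 2 ^ (k - 1)) ∧
    ∑ k ∈ Finset.Icc 1 n, dk θ τ k (k - 1) ≤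
      2 * (Finset.Icc 1 N).sup' (Finset.nonempty_Icc.mpr hN) τ := by
  have hdiag : ∀ k, 1 ≤ k → k ≤ n → dk θ τ k (k - 1) ≤ τ k / 2 ^ (k - 1) := by
    intro k hk hkn
    obtain ⟨m, rfl⟩ := Nat.exists_eq_add_of_le' hk
    exact (dk_diag_nonneg_and_le hθ hτ m (by omega)).2
  set M := (Finset.Icc 1 N).sup' (Finset.nonempty_Icc.mpr hN) τ
  have hle_M : ∀ k ∈ Icc 1 n, τ k ≤ M := fun k hk =>
    le_sup' τ (Icc_subset_Icc_right hnN hk)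
  have hM : 0 ≤ M := (hτ 1 le_rfl hN).le.trans (le_sup' τ (mem_Icc.2 ⟨le_rfl, hN⟩))
  refine ⟨hdiag, ?_⟩
  calc ∑ k ∈ Icc 1 n, dk θ τ k (k - 1)
      ≤ ∑ k ∈ Icc 1 n, τ k / 2 ^ (k - 1) :=
        sum_le_sum fun k hk => hdiag k (mem_Icc.1 hk).1 (mem_Icc.1 hk).2
    _ ≤ 2 * M := sum_Icc_div_two_pow_le n hM hle_M

/-- For `θ ∈ [1/2, 1]` and arbitrary positive steps `τ_1, …, τ_N`, the DOC
kernels satisfy `d_{k−1}^{(k)} ≤ τ_k / 2^{k−1}` for every `1 ≤ k ≤ n`, and consequently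
`∑_{k=1}^n d_{k−1}^{(k)} ≤ 2 τ_max`, where `τ_max = max_{1 ≤ k ≤ N} τ_k`. -/
theorem doc_first_column_bound
    (θ : ℝ) (hθ : 1 / 2 ≤ θ ∧ θ ≤ 1)
    (N : ℕ) (hN : 1 ≤ N)
    (τ : ℕ → ℝ) (hτ : ∀ k, 1 ≤ k → k ≤ N → 0 < τ k)
    (n : ℕ) (hn : 1 ≤ n) (hnN : n ≤ N) :
    (∀ k, 1 ≤ k → k ≤ n → dk θ τ k (k - 1) ≤ τ k / 2 ^ (k - 1)) ∧
    ∑ k ∈ Finset.Icc 1 n, dk θ τ k (k - 1) ≤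
      2 * (Finset.Icc 1 N).sup' (Finset.nonempty_Icc.mpr hN) τ :=
  doc_first_column_bound_general θ hθ N hN τ hτ n hnN
end

section
/- Let θ ∈ (1/2, 1], suppose all ratios r_2, …, r_{N+1} satisfy 0 < r_k ≤ r_s (the unique positive root of (1 − 2θ)² r³ − 4θ² r² − 4θ r − 1 = 0), and assume the Poincaré-type inequality ‖x‖² ≤ C_Ω² ⟨Ax, x⟩ holds for all x ∈ H with a constant C_Ω > 0. With the discrete energies E^0 := ⟨A u^0, u^0⟩ and E^k := ((2θ − 1) r_{k+1}^{3/2}/(1 + r_{k+1})) τ_k ‖(u^k − u^{k−1})/τ_k‖² + ⟨A u^k, u^k⟩, the WSBDF2 solution is unconditionally stable in the energy norm: √(E^n) ≤ √(E^0) + 4 C_Ω (‖f^0‖ + ∑_{k=1}^n ‖f^k − f^{k−1}‖) for every 1 ≤ n ≤ N. -/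
/-!
Testing the scheme with `u^n - u^{n-1}` and splitting the `b_1^{(n)}` term by Young's inequality
with weight `√r_n` gives the one-step inequality `E^n ≤ E^{n-1} + 2 ⟪g^n, u^n - u^{n-1}⟫` with
`g^n = θ f^n + (1 - θ) f^{n-1}`. The step-ratio bound `r_k ≤ r_s` is what lets the leftover
coefficient of `‖u^n - u^{n-1}‖²` dominate the one in `E^n`: the cubic says precisely that
`(2θ - 1) r_s^{3/2} = 1 + 2θ r_s`. Summing by parts moves the differences onto `g`, the
Poincaré inequality gives `‖u^k‖ ≤ C_Ω √E^k`, and at the index where `√E^k` is largest the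
telescoped inequality becomes a quadratic inequality for that maximum.
-/

open Finset

open scoped RealInnerProductSpace

noncomputable def energyWeight (θ r : ℝ) : ℝ := (2 * θ - 1) * r ^ ((3 : ℝ) / 2) / (1 + r)

lemma rpow_three_halves {x : ℝ} (hx : 0 ≤ x) : x ^ ((3 : ℝ) / 2) = x * √x := by
  rw [show (3 : ℝ) / 2 = 1 + 1 / 2 by norm_num, Real.rpow_add' hx (by norm_num), Real.rpow_one,
    Real.sqrt_eq_rpow]

lemma energyWeight_eq {θ r : ℝ} (hr : 0 ≤ r) :
    energyWeight θ r = (2 * θ - 1) * (r * √r) / (1 + r) := by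
  rw [energyWeight, rpow_three_halves hr]

lemma energyWeight_nonneg {θ r : ℝ} (hθ : 1 / 2 ≤ θ) (hr : 0 ≤ r) : 0 ≤ energyWeight θ r := by
  rw [energyWeight_eq hr]
  have : 0 ≤ 2 * θ - 1 := by linarith
  positivity

lemma energyWeight_le_energyWeight {θ r r' : ℝ} (hθ : 1 / 2 ≤ θ) (hr : 0 ≤ r) (hrr' : r ≤ r') :
    energyWeight θ r ≤ energyWeight θ r' := by
  have hr' : 0 ≤ r' := hr.trans hrr'
  have hsqrt : √r ≤ √r' := Real.sqrt_le_sqrt hrr'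
  have hpow : r * √r ≤ r' * √r' := mul_le_mul hrr' hsqrt (Real.sqrt_nonneg r) hr'
  have key : r * √r * (1 + r') ≤ r' * √r' * (1 + r) := by
    nlinarith [mul_le_mul_of_nonneg_left hsqrt (mul_nonneg hr hr')]
  have h2θ : 0 ≤ 2 * θ - 1 := by linarith
  rw [energyWeight_eq hr, energyWeight_eq hr', div_le_div_iff₀ (by linarith) (by linarith)]
  nlinarith [mul_le_mul_of_nonneg_left key h2θ]

lemma mul_mul_sqrt_eq_of_root {θ rs : ℝ} (hθ : 1 / 2 ≤ θ) (hrs : 0 < rs)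
    (hroot : (1 - 2 * θ) ^ 2 * rs ^ 3 - 4 * θ ^ 2 * rs ^ 2 - 4 * θ * rs - 1 = 0) :
    (2 * θ - 1) * (rs * √rs) = 1 + 2 * θ * rs := by
  have hsq : √rs ^ 2 = rs := Real.sq_sqrt hrs.le
  -- the cubic is `((2θ - 1) rs √rs)² - (1 + 2θ rs)²`
  have hfactor : ((2 * θ - 1) * (rs * √rs) - (1 + 2 * θ * rs)) *
      ((2 * θ - 1) * (rs * √rs) + (1 + 2 * θ * rs)) = 0 := by
    linear_combination hroot + (2 * θ - 1) ^ 2 * rs ^ 2 * hsq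
  have hpos : 0 < (2 * θ - 1) * (rs * √rs) + (1 + 2 * θ * rs) := by
    have : 0 ≤ 2 * θ - 1 := by linarith
    positivity
  linarith [(mul_eq_zero.mp hfactor).resolve_right hpos.ne']

lemma energyWeight_mul_add_le {θ rs r r' : ℝ} (hθ : 1 / 2 ≤ θ) (hθ1 : θ ≤ 1) (hrs : 0 < rs)
    (hroot : (1 - 2 * θ) ^ 2 * rs ^ 3 - 4 * θ ^ 2 * rs ^ 2 - 4 * θ * rs - 1 = 0)
    (hr : 0 ≤ r) (hrrs : r ≤ rs) (hr' : 0 ≤ r') (hr'rs : r' ≤ rs) :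
    energyWeight θ r' * (1 + r) + (2 * θ - 1) * (r * √r) ≤ 2 * (1 + 2 * θ * r) := by
  have h2θ : 0 ≤ 2 * θ - 1 := by linarith
  have hrs_eq := mul_mul_sqrt_eq_of_root hθ hrs hroot
  calc energyWeight θ r' * (1 + r) + (2 * θ - 1) * (r * √r)
      ≤ energyWeight θ rs * (1 + r) + (2 * θ - 1) * (r * √rs) := by
        gcongr
        exact energyWeight_le_energyWeight hθ hr' hr'rs
    _ = (1 + 2 * θ * rs) * (1 + r) / (1 + rs) + r * (1 + 2 * θ * rs) / rs := by
        rw [energyWeight_eq hrs.le, hrs_eq]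
        field_simp
        linear_combination (1 + rs) * r * hrs_eq
    _ ≤ 2 * (1 + 2 * θ * r) := by
        rw [div_add_div _ _ (by positivity) hrs.ne', div_le_iff₀ (by positivity)]
        nlinarith [mul_nonneg (sub_nonneg.mpr hrrs) (by nlinarith : 0 ≤ 1 + 2 * rs - 2 * θ * rs)]

namespace ContinuousLinearMap.IsPositive

variable {H : Type*} [NormedAddCommGroup H] [InnerProductSpace ℝ H] {T : H →L[ℝ] H}

lemma inner_apply_self_sub_le (hT : T.IsPositive) {θ : ℝ} (hθ : 1 / 2 ≤ θ) (a b : H) :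
    ⟪T a, a⟫ - ⟪T b, b⟫ ≤ 2 * ⟪T (θ • a + (1 - θ) • b), a - b⟫ := by
  have hsymm : ⟪T b, a⟫ = ⟪T a, b⟫ := by
    rw [hT.inner_left_eq_inner_right, real_inner_comm]
  have hsplit : 2 * ⟪T (θ • a + (1 - θ) • b), a - b⟫ =
      ⟪T a, a⟫ - ⟪T b, b⟫ + (2 * θ - 1) * ⟪T (a - b), a - b⟫ := by
    simp only [map_add, map_sub, map_smul, inner_add_left, inner_sub_left, inner_sub_right,
      real_inner_smul_left, hsymm]
    ring
  rw [hsplit]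
  have : 0 ≤ 2 * θ - 1 := by linarith
  nlinarith [hT.inner_nonneg_left (a - b)]

/-- Test with `a - b`; Young's inequality with weight `s` splits `2 ⟪w, a - b⟫`. -/
lemma energy_step (hT : T.IsPositive) {θ b₀ β s : ℝ} (hθ : 1 / 2 ≤ θ) (hβ : 0 ≤ β) (hs : 0 < s)
    {a b w g : H} (h : b₀ • (a - b) - β • w + T (θ • a + (1 - θ) • b) = g) :
    (2 * b₀ - β / s) * ‖a - b‖ ^ 2 + ⟪T a, a⟫ ≤
      β * s * ‖w‖ ^ 2 + ⟪T b, b⟫ + 2 * ⟪g, a - b⟫ := by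
  set v := a - b
  have htest : b₀ * ‖v‖ ^ 2 - β * ⟪w, v⟫ + ⟪T (θ • a + (1 - θ) • b), v⟫ = ⟪g, v⟫ := by
    rw [← h, inner_add_left, inner_sub_left, real_inner_smul_left, real_inner_smul_left,
      real_inner_self_eq_norm_sq]
  have hyoung : 2 * ⟪w, v⟫ ≤ ‖v‖ ^ 2 / s + s * ‖w‖ ^ 2 := by
    have hsq := norm_sub_sq_real v (s • w)
    rw [real_inner_smul_right, norm_smul, Real.norm_of_nonneg hs.le, real_inner_comm] at hsq
    rw [div_add' _ _ _ hs.ne', le_div_iff₀ hs]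
    nlinarith [sq_nonneg ‖v - s • w‖]
  have hdiv : β / s * ‖v‖ ^ 2 = β * (‖v‖ ^ 2 / s) := by ring
  nlinarith [mul_le_mul_of_nonneg_left hyoung hβ, hT.inner_apply_self_sub_le hθ a b]

end ContinuousLinearMap.IsPositive

section BoundedVariation

variable {E : Type*} [SeminormedAddCommGroup E]

def bvNorm (x : ℕ → E) (n : ℕ) : ℝ := ‖x 0‖ + ∑ k ∈ Icc 1 n, ‖x k - x (k - 1)‖

lemma bvNorm_zero (x : ℕ → E) : bvNorm x 0 = ‖x 0‖ := by
  simp [bvNorm]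

lemma bvNorm_succ (x : ℕ → E) (n : ℕ) : bvNorm x (n + 1) = bvNorm x n + ‖x (n + 1) - x n‖ := by
  rw [bvNorm, sum_Icc_succ_top (by omega), Nat.add_sub_cancel, bvNorm, add_assoc]

lemma bvNorm_mono (x : ℕ → E) : Monotone (bvNorm x) :=
  monotone_nat_of_le_succ fun n => by
    rw [bvNorm_succ]
    exact le_add_of_nonneg_right (norm_nonneg _)

lemma norm_le_bvNorm (x : ℕ → E) (n : ℕ) : ‖x n‖ ≤ bvNorm x n := by
  induction n with
  | zero => rw [bvNorm_zero]
  | succ n ih =>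
    rw [bvNorm_succ]
    linarith [norm_le_norm_add_norm_sub' (x (n + 1)) (x n)]

variable [NormedSpace ℝ E]

/-- The extra `(1 - θ) ‖x n - x (n - 1)‖` is what makes the induction go through. -/
lemma bvNorm_convexComb_shift_add_le (x : ℕ → E) {θ : ℝ} (hθ₀ : 0 ≤ θ) (hθ₁ : θ ≤ 1) (n : ℕ) :
    bvNorm (fun k => θ • x k + (1 - θ) • x (k - 1)) n + (1 - θ) * ‖x n - x (n - 1)‖ ≤
      bvNorm x n := by
  induction n with
  | zero => simp [bvNorm_zero, ← add_smul]
  | succ n ih =>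
    have hdiff : θ • x (n + 1) + (1 - θ) • x (n + 1 - 1) - (θ • x n + (1 - θ) • x (n - 1)) =
        θ • (x (n + 1) - x n) + (1 - θ) • (x n - x (n - 1)) := by
      rw [Nat.add_sub_cancel, smul_sub, smul_sub]
      abel
    have hnorm : ‖θ • (x (n + 1) - x n) + (1 - θ) • (x n - x (n - 1))‖ ≤
        θ * ‖x (n + 1) - x n‖ + (1 - θ) * ‖x n - x (n - 1)‖ := by
      refine (norm_add_le _ _).trans_eq ?_
      rw [norm_smul, norm_smul, Real.norm_of_nonneg hθ₀, Real.norm_of_nonneg (by linarith)]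
    rw [bvNorm_succ, bvNorm_succ, hdiff, Nat.add_sub_cancel]
    linarith

lemma bvNorm_convexComb_shift_le (x : ℕ → E) {θ : ℝ} (hθ₀ : 0 ≤ θ) (hθ₁ : θ ≤ 1) (n : ℕ) :
    bvNorm (fun k => θ • x k + (1 - θ) • x (k - 1)) n ≤ bvNorm x n := by
  have : 0 ≤ (1 - θ) * ‖x n - x (n - 1)‖ := mul_nonneg (by linarith) (norm_nonneg _)
  linarith [bvNorm_convexComb_shift_add_le x hθ₀ hθ₁ n]

end BoundedVariation

section SummationByParts

variable {H : Type*} [NormedAddCommGroup H] [InnerProductSpace ℝ H]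

lemma sum_inner_sub_eq (g u : ℕ → H) (n : ℕ) :
    ∑ k ∈ Icc 1 n, ⟪g k, u k - u (k - 1)⟫ =
      ⟪g n, u n⟫ - ⟪g 0, u 0⟫ - ∑ k ∈ Icc 1 n, ⟪g k - g (k - 1), u (k - 1)⟫ := by
  induction n with
  | zero => simp
  | succ n ih =>
    rw [sum_Icc_succ_top (by omega), sum_Icc_succ_top (by omega), ih, Nat.add_sub_cancel,
      inner_sub_left, inner_sub_right]
    ring

lemma sum_inner_sub_le (g u : ℕ → H) {n : ℕ} {R : ℝ} (hu : ∀ k ≤ n, ‖u k‖ ≤ R) :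
    ∑ k ∈ Icc 1 n, ⟪g k, u k - u (k - 1)⟫ ≤ 2 * R * bvNorm g n := by
  have hR : 0 ≤ R := (norm_nonneg _).trans (hu 0 n.zero_le)
  have hle {x : H} {k : ℕ} (hk : k ≤ n) : |⟪x, u k⟫| ≤ ‖x‖ * R :=
    (abs_real_inner_le_norm _ _).trans (mul_le_mul_of_nonneg_left (hu k hk) (norm_nonneg _))
  have hsum : -∑ k ∈ Icc 1 n, ⟪g k - g (k - 1), u (k - 1)⟫ ≤
      (∑ k ∈ Icc 1 n, ‖g k - g (k - 1)‖) * R := by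
    rw [← sum_neg_distrib, sum_mul]
    exact sum_le_sum fun k hk => (neg_le_abs _).trans (hle (by grind))
  have hn := (le_abs_self _).trans (hle (x := g n) le_rfl)
  have h0 := (neg_le_abs _).trans (hle (x := g 0) n.zero_le)
  have hbv := mul_le_mul_of_nonneg_right (norm_le_bvNorm g n) hR
  rw [sum_inner_sub_eq, bvNorm] at *
  linarith

end SummationByParts

lemma le_add_sum_of_le_add {e d : ℕ → ℝ} {n : ℕ}
    (h : ∀ k, 1 ≤ k → k ≤ n → e k ≤ e (k - 1) + d k) : e n ≤ e 0 + ∑ k ∈ Icc 1 n, d k := by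
  induction n with
  | zero => simp
  | succ n ih =>
    rw [sum_Icc_succ_top (by omega)]
    have := h (n + 1) (by omega) le_rfl
    rw [Nat.add_sub_cancel] at this
    linarith [ih fun k hk hkn => h k hk (by omega)]

lemma sqrt_le_sqrt_add_of_energy_step {H : Type*} [NormedAddCommGroup H] [InnerProductSpace ℝ H]
    {e : ℕ → ℝ} {g u : ℕ → H} {C : ℝ} {n : ℕ} (hC : 0 < C)
    (hu : ∀ k ≤ n, ‖u k‖ ^ 2 ≤ C ^ 2 * e k)
    (hstep : ∀ k, 1 ≤ k → k ≤ n → e k ≤ e (k - 1) + 2 * ⟪g k, u k - u (k - 1)⟫) :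
    √(e n) ≤ √(e 0) + 4 * C * bvNorm g n := by
  have he : ∀ k ≤ n, 0 ≤ e k := fun k hk =>
    nonneg_of_mul_nonneg_right ((sq_nonneg _).trans (hu k hk)) (by positivity)
  have hnorm : ∀ k ≤ n, ‖u k‖ ≤ C * √(e k) := fun k hk => by
    simpa [Real.sqrt_mul (sq_nonneg C), Real.sqrt_sq hC.le] using Real.sqrt_le_sqrt (hu k hk)
  obtain ⟨m, hm, hmax⟩ := (range (n + 1)).exists_mem_eq_sup' nonempty_range_add_one
    fun k => √(e k)
  set M := (range (n + 1)).sup' nonempty_range_add_one fun k => √(e k)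
  have hle_M : ∀ k ≤ n, √(e k) ≤ M := fun k hk =>
    le_sup' (fun k => √(e k)) (mem_range_succ_iff.mpr hk)
  have hmn : m ≤ n := mem_range_succ_iff.mp hm
  have hM : 0 ≤ M := hmax ▸ Real.sqrt_nonneg _
  have hbv : 0 ≤ bvNorm g n := (norm_nonneg _).trans (norm_le_bvNorm g n)
  have hem : e m ≤ e 0 + 4 * (C * M) * bvNorm g n := by
    have hsum := sum_inner_sub_le g u (n := m) (R := C * M) fun k hk =>
      (hnorm k (hk.trans hmn)).trans (by gcongr; exact hle_M k (hk.trans hmn))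
    have hmono := mul_le_mul_of_nonneg_left (bvNorm_mono g hmn) (by positivity : 0 ≤ C * M)
    have htel := le_add_sum_of_le_add (n := m) (d := fun k => 2 * ⟪g k, u k - u (k - 1)⟫)
      fun k hk hkm => hstep k hk (hkm.trans hmn)
    rw [← mul_sum] at htel
    linarith
  have hsq : M ^ 2 ≤ (√(e 0) + 4 * C * bvNorm g n) * M := by
    have h0 : e 0 ≤ √(e 0) * M := by
      calc e 0 = √(e 0) * √(e 0) := (Real.mul_self_sqrt (he 0 n.zero_le)).symm
        _ ≤ √(e 0) * M := mul_le_mul_of_nonneg_left (hle_M 0 n.zero_le) (Real.sqrt_nonneg _)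
    rw [hmax, Real.sq_sqrt (he m hmn), ← hmax]
    linarith
  have hB : 0 ≤ √(e 0) + 4 * C * bvNorm g n := by positivity
  exact (hle_M n le_rfl).trans (by nlinarith)

section WSBDF2

variable {θ : ℝ} {τ : ℕ → ℝ}

lemma bk_zero_of_two_le {n : ℕ} (hn : 2 ≤ n) :
    bk θ τ n 0 = (1 + 2 * θ * rr τ n) / (τ n * (1 + rr τ n)) := by
  rw [bk, if_neg (by omega), if_pos rfl]

lemma bk_one_of_two_le {n : ℕ} (hn : 2 ≤ n) :
    bk θ τ n 1 = -((2 * θ - 1) * rr τ n ^ 2 / (τ n * (1 + rr τ n))) := by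
  rw [bk, if_neg (by omega), if_neg one_ne_zero, if_pos rfl]
  ring

lemma mul_mul_norm_inv_smul_sq {E : Type*} [SeminormedAddCommGroup E] [NormedSpace ℝ E]
    (c : ℝ) {t : ℝ} (ht : t ≠ 0) (v : E) : c * t * ‖t⁻¹ • v‖ ^ 2 = c / t * ‖v‖ ^ 2 := by
  rw [norm_smul, norm_inv, Real.norm_eq_abs, mul_pow, inv_pow, sq_abs]
  field_simp

variable {H : Type*} [NormedAddCommGroup H] [InnerProductSpace ℝ H] {A : H →L[ℝ] H} {rs : ℝ}

lemma wsbdf2_first_step_energy_le (hA : A.IsPositive) (hθ : 1 / 2 ≤ θ) (hθ1 : θ ≤ 1)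
    (hrs : 0 < rs)
    (hroot : (1 - 2 * θ) ^ 2 * rs ^ 3 - 4 * θ ^ 2 * rs ^ 2 - 4 * θ * rs - 1 = 0)
    (hτ : 0 < τ 1) (hr : 0 ≤ rr τ 2) (hrrs : rr τ 2 ≤ rs) {u : ℕ → H} {g : H}
    (hscheme : (τ 1)⁻¹ • (u 1 - u 0) + A (θ • u 1 + (1 - θ) • u 0) = g) :
    energyWeight θ (rr τ 2) / τ 1 * ‖u 1 - u 0‖ ^ 2 + ⟪A (u 1), u 1⟫ ≤
      ⟪A (u 0), u 0⟫ + 2 * ⟪g, u 1 - u 0⟫ := by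
  have hstep := hA.energy_step hθ le_rfl one_pos (w := 0) (by simpa using hscheme)
  have hweight : energyWeight θ (rr τ 2) ≤ 2 := by
    simpa using energyWeight_mul_add_le hθ hθ1 hrs hroot le_rfl hrs.le hr hrrs
  have hcoef : energyWeight θ (rr τ 2) / τ 1 ≤ 2 * (τ 1)⁻¹ := by
    rw [div_eq_mul_inv]
    gcongr
  simp only [sub_zero, div_one, zero_mul, norm_zero, zero_add] at hstep
  nlinarith [mul_le_mul_of_nonneg_right hcoef (sq_nonneg ‖u 1 - u 0‖)]

lemma wsbdf2_step_energy_le (hA : A.IsPositive) (hθ : 1 / 2 ≤ θ) (hθ1 : θ ≤ 1) (hrs : 0 < rs)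
    (hroot : (1 - 2 * θ) ^ 2 * rs ^ 3 - 4 * θ ^ 2 * rs ^ 2 - 4 * θ * rs - 1 = 0) {n : ℕ}
    (hτ : 0 < τ (n + 1)) (hr : 0 < rr τ (n + 2)) (hrrs : rr τ (n + 2) ≤ rs)
    (hr' : 0 ≤ rr τ (n + 3)) (hr'rs : rr τ (n + 3) ≤ rs) {u : ℕ → H} {g : H}
    (hscheme : bk θ τ (n + 2) 0 • (u (n + 2) - u (n + 1)) + bk θ τ (n + 2) 1 • (u (n + 1) - u n)
      + A (θ • u (n + 2) + (1 - θ) • u (n + 1)) = g) :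
    energyWeight θ (rr τ (n + 3)) / τ (n + 2) * ‖u (n + 2) - u (n + 1)‖ ^ 2
        + ⟪A (u (n + 2)), u (n + 2)⟫ ≤
      energyWeight θ (rr τ (n + 2)) / τ (n + 1) * ‖u (n + 1) - u n‖ ^ 2
        + ⟪A (u (n + 1)), u (n + 1)⟫ + 2 * ⟪g, u (n + 2) - u (n + 1)⟫ := by
  have hτr : τ (n + 2) = rr τ (n + 2) * τ (n + 1) := (div_mul_cancel₀ _ hτ.ne').symm
  have hτ2 : 0 < τ (n + 2) := hτr ▸ mul_pos hr hτ
  have hweight := energyWeight_mul_add_le hθ hθ1 hrs hroot hr.le hrrs hr' hr'rs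
  rw [bk_zero_of_two_le le_add_self, bk_one_of_two_le le_add_self] at hscheme
  rw [energyWeight_eq hr.le]
  generalize rr τ (n + 2) = r at hr hτr hweight hscheme ⊢
  obtain ⟨s, hs, rfl⟩ : ∃ s, 0 < s ∧ r = s ^ 2 :=
    ⟨√r, Real.sqrt_pos.mpr hr, (Real.sq_sqrt hr.le).symm⟩
  rw [Real.sqrt_sq hs.le] at hweight ⊢
  set β := (2 * θ - 1) * (s ^ 2) ^ 2 / (τ (n + 2) * (1 + s ^ 2)) with hβ_def
  have hβ : 0 ≤ β := by
    have : 0 ≤ 2 * θ - 1 := by linarith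
    positivity
  have hstep := hA.energy_step hθ hβ hs
    (b₀ := (1 + 2 * θ * s ^ 2) / (τ (n + 2) * (1 + s ^ 2))) (a := u (n + 2)) (b := u (n + 1))
    (w := u (n + 1) - u n) (g := g) (by rw [← hscheme, neg_smul, sub_eq_add_neg])
  have hcur : energyWeight θ (rr τ (n + 3)) / τ (n + 2) ≤
      2 * ((1 + 2 * θ * s ^ 2) / (τ (n + 2) * (1 + s ^ 2))) - β / s := by
    have heq : 2 * ((1 + 2 * θ * s ^ 2) / (τ (n + 2) * (1 + s ^ 2))) - β / s =
        (2 * (1 + 2 * θ * s ^ 2) - (2 * θ - 1) * (s ^ 2 * s)) / (τ (n + 2) * (1 + s ^ 2)) := by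
      rw [hβ_def]
      field_simp
    rw [heq, div_le_div_iff₀ hτ2 (by positivity)]
    nlinarith [mul_le_mul_of_nonneg_left hweight hτ2.le]
  have hprev : β * s = (2 * θ - 1) * (s ^ 2 * s) / (1 + s ^ 2) / τ (n + 1) := by
    rw [hβ_def, hτr]
    field_simp
  rw [hprev] at hstep
  nlinarith [mul_le_mul_of_nonneg_right hcur (sq_nonneg ‖u (n + 2) - u (n + 1)‖)]

end WSBDF2

theorem wsbdf2_energy_stability_general
    {H : Type*} [NormedAddCommGroup H] [InnerProductSpace ℝ H]
    (A : H →L[ℝ] H)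
    (hA_selfadj : ∀ x y : H, ⟪A x, y⟫ = ⟪x, A y⟫)
    (hA_nonneg : ∀ x : H, 0 ≤ ⟪A x, x⟫)
    (θ : ℝ) (hθ : 1 / 2 < θ ∧ θ ≤ 1)
    (N : ℕ)
    (τ : ℕ → ℝ) (hτ : ∀ k, 1 ≤ k → k ≤ N + 1 → 0 < τ k)
    (rs : ℝ) (hrs_pos : 0 < rs)
    (hrs_root : (1 - 2 * θ) ^ 2 * rs ^ 3 - 4 * θ ^ 2 * rs ^ 2 - 4 * θ * rs - 1 = 0)
    (hr : ∀ k, 2 ≤ k → k ≤ N + 1 → 0 < rr τ k ∧ rr τ k ≤ rs)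
    (CΩ : ℝ) (hCΩ : 0 < CΩ)
    (hPoincare : ∀ x : H, ‖x‖ ^ 2 ≤ CΩ ^ 2 * ⟪A x, x⟫)
    (u f : ℕ → H)
    (hscheme1 : (τ 1)⁻¹ • (u 1 - u 0) + A (θ • u 1 + (1 - θ) • u 0)
      = θ • f 1 + (1 - θ) • f 0)
    (hscheme : ∀ n, 2 ≤ n → n ≤ N →
      bk θ τ n 0 • (u n - u (n - 1)) + bk θ τ n 1 • (u (n - 1) - u (n - 2)) +
        A (θ • u n + (1 - θ) • u (n - 1)) = θ • f n + (1 - θ) • f (n - 1))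
    (E : ℕ → ℝ)
    (hE0 : E 0 = ⟪A (u 0), u 0⟫)
    (hEk : ∀ k, 1 ≤ k → k ≤ N →
      E k = (2 * θ - 1) * (rr τ (k + 1)) ^ ((3 : ℝ) / 2) / (1 + rr τ (k + 1)) * τ k *
          ‖(τ k)⁻¹ • (u k - u (k - 1))‖ ^ 2 + ⟪A (u k), u k⟫) :
    ∀ n, 1 ≤ n → n ≤ N →
      Real.sqrt (E n) ≤ Real.sqrt (E 0) +
        4 * CΩ * (‖f 0‖ + ∑ k ∈ Finset.Icc 1 n, ‖f k - f (k - 1)‖) := by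
  obtain ⟨hθ₀, hθ₁⟩ := hθ
  have hA : A.IsPositive := A.isPositive_iff.2 ⟨hA_selfadj, hA_nonneg⟩
  have hE : ∀ k, 1 ≤ k → k ≤ N →
      E k = energyWeight θ (rr τ (k + 1)) / τ k * ‖u k - u (k - 1)‖ ^ 2 + ⟪A (u k), u k⟫ :=
    fun k hk hkN => by
      rw [hEk k hk hkN, energyWeight, mul_mul_norm_inv_smul_sq _ (hτ k hk (by omega)).ne']
  have hAE : ∀ k ≤ N, ⟪A (u k), u k⟫ ≤ E k := by
    intro k hkN
    rcases k.eq_zero_or_pos with rfl | hk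
    · exact hE0.ge
    · have hw := energyWeight_nonneg hθ₀.le (hr (k + 1) (by omega) (by omega)).1.le
      have hτk := hτ k hk (by omega)
      rw [hE k hk hkN, le_add_iff_nonneg_left]
      positivity
  intro n hn hnN
  refine (sqrt_le_sqrt_add_of_energy_step hCΩ (u := u)
    (g := fun k => θ • f k + (1 - θ) • f (k - 1))
    (fun k hk => ?_) (fun k hk hkn => ?_)).trans ?_
  · exact (hPoincare (u k)).trans (by gcongr; exact hAE k (hk.trans hnN))
  · rcases hk.eq_or_lt with rfl | hk2
    · obtain ⟨hr₂, hr₂s⟩ := hr 2 le_rfl (by omega)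
      rw [hE 1 le_rfl (hkn.trans hnN)]
      exact hE0 ▸ wsbdf2_first_step_energy_le hA hθ₀.le hθ₁ hrs_pos hrs_root
        (hτ 1 le_rfl (by omega)) hr₂.le hr₂s hscheme1
    · obtain ⟨j, rfl⟩ : ∃ j, k = j + 2 := ⟨k - 2, by omega⟩
      obtain ⟨hrj, hrjs⟩ := hr (j + 2) hk2 (by omega)
      obtain ⟨hrj', hrjs'⟩ := hr (j + 3) (by omega) (by omega)
      show E (j + 2) ≤
        E (j + 1) + 2 * ⟪θ • f (j + 2) + (1 - θ) • f (j + 1), u (j + 2) - u (j + 1)⟫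
      rw [hE (j + 2) (by omega) (hkn.trans hnN), hE (j + 1) (by omega) (by omega)]
      exact wsbdf2_step_energy_le hA hθ₀.le hθ₁ hrs_pos hrs_root
        (hτ (j + 1) (by omega) (by omega)) hrj hrjs hrj'.le hrjs'
        (hscheme (j + 2) hk2 (hkn.trans hnN))
  · gcongr
    exact bvNorm_convexComb_shift_le f (by linarith) hθ₁ n

/-- unconditional energy-norm stability of the WSBDF2 scheme. Under
`θ ∈ (1/2, 1]`, ratios `0 < r_k ≤ r_s` (`r_s` the unique positive root of
`(1 − 2θ)² r³ − 4θ² r² − 4θ r − 1 = 0`), and the Poincaré-type inequality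
`‖x‖² ≤ C_Ω² ⟨Ax, x⟩`, with discrete energies `E^0 = ⟨A u^0, u^0⟩` and
`E^k = ((2θ − 1) r_{k+1}^{3/2}/(1 + r_{k+1})) τ_k ‖(u^k − u^{k−1})/τ_k‖² + ⟨A u^k, u^k⟩`:
`√(E^n) ≤ √(E^0) + 4 C_Ω (‖f^0‖ + ∑_{k=1}^n ‖f^k − f^{k−1}‖)` for every `1 ≤ n ≤ N`. -/
theorem wsbdf2_energy_stability
    {H : Type*} [NormedAddCommGroup H] [InnerProductSpace ℝ H] [CompleteSpace H]
    (A : H →L[ℝ] H)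
    (hA_selfadj : ∀ x y : H, ⟪A x, y⟫ = ⟪x, A y⟫)
    (hA_nonneg : ∀ x : H, 0 ≤ ⟪A x, x⟫)
    (θ : ℝ) (hθ : 1 / 2 < θ ∧ θ ≤ 1)
    (N : ℕ) (hN : 1 ≤ N)
    (τ : ℕ → ℝ) (hτ : ∀ k, 1 ≤ k → k ≤ N + 1 → 0 < τ k)
    (rs : ℝ) (hrs_pos : 0 < rs)
    (hrs_root : (1 - 2 * θ) ^ 2 * rs ^ 3 - 4 * θ ^ 2 * rs ^ 2 - 4 * θ * rs - 1 = 0)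
    (hrs_uniq : ∀ r : ℝ, 0 < r →
      (1 - 2 * θ) ^ 2 * r ^ 3 - 4 * θ ^ 2 * r ^ 2 - 4 * θ * r - 1 = 0 → r = rs)
    (hr : ∀ k, 2 ≤ k → k ≤ N + 1 → 0 < rr τ k ∧ rr τ k ≤ rs)
    (CΩ : ℝ) (hCΩ : 0 < CΩ)
    (hPoincare : ∀ x : H, ‖x‖ ^ 2 ≤ CΩ ^ 2 * ⟪A x, x⟫)
    (u f : ℕ → H)
    (hscheme1 : (τ 1)⁻¹ • (u 1 - u 0) + A (θ • u 1 + (1 - θ) • u 0)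
      = θ • f 1 + (1 - θ) • f 0)
    (hscheme : ∀ n, 2 ≤ n → n ≤ N →
      bk θ τ n 0 • (u n - u (n - 1)) + bk θ τ n 1 • (u (n - 1) - u (n - 2)) +
        A (θ • u n + (1 - θ) • u (n - 1)) = θ • f n + (1 - θ) • f (n - 1))
    (E : ℕ → ℝ)
    (hE0 : E 0 = ⟪A (u 0), u 0⟫)
    (hEk : ∀ k, 1 ≤ k → k ≤ N →
      E k = (2 * θ - 1) * (rr τ (k + 1)) ^ ((3 : ℝ) / 2) / (1 + rr τ (k + 1)) * τ k *
          ‖(τ k)⁻¹ • (u k - u (k - 1))‖ ^ 2 + ⟪A (u k), u k⟫) :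
    ∀ n, 1 ≤ n → n ≤ N →
      Real.sqrt (E n) ≤ Real.sqrt (E 0) +
        4 * CΩ * (‖f 0‖ + ∑ k ∈ Finset.Icc 1 n, ‖f k - f (k - 1)‖) :=
  wsbdf2_energy_stability_general A hA_selfadj hA_nonneg θ hθ N τ hτ rs hrs_pos hrs_root hr CΩ hCΩ
    hPoincare u f hscheme1 hscheme E hE0 hEk
end
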